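/- arXiv:1507.06919 — 6 statements merged into one kernel-verified Lean document; each statement's English description precedes it below -/
import Mathlib

section
/- If G is a connected (C₄,P₄)-free graph of order n, then G has a vertex of degree n−1 (i.e., Δ(G) = n−1). -/
open SimpleGraph

/-- A coloring of the vertices with colors `0, ..., k-1` which uses all `k` colors and such
that every pair of distinct colors appears on the endpoints of some edge. -/
def IsCompleteColoring {V : Type*} (G : SimpleGraph V) (c : V → ℕ) (k : ℕ) : Prop :=
  (∀ v, c v < k) ∧ (∀ i, i < k → ∃ v, c v = i) ∧
    ∀ i j, i < k → j < k → i ≠ j → ∃ u w, G.Adj u w ∧ c u = i ∧ c w = j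

/-- A proper coloring: adjacent vertices get distinct colors. -/
def IsProperColoring {V : Type*} (G : SimpleGraph V) (c : V → ℕ) : Prop :=
  ∀ u w, G.Adj u w → c u ≠ c w

/-- A Grundy coloring with `k` colors: proper, uses all `k` colors, and every vertex of
color `j` has, for each `i < j`, a neighbor colored `i`. -/
def IsGrundyColoring {V : Type*} (G : SimpleGraph V) (c : V → ℕ) (k : ℕ) : Prop :=
  (∀ v, c v < k) ∧ (∀ i, i < k → ∃ v, c v = i) ∧ IsProperColoring G c ∧
    ∀ v i, i < c v → ∃ u, G.Adj u v ∧ c u = i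

/-- The pseudoachromatic number `ψ`. -/
noncomputable def pseudoachromaticNumber {V : Type*} (G : SimpleGraph V) : ℕ :=
  sSup {k | ∃ c, IsCompleteColoring G c k}

/-- The achromatic number `α`. -/
noncomputable def achromaticNumber {V : Type*} (G : SimpleGraph V) : ℕ :=
  sSup {k | ∃ c, IsCompleteColoring G c k ∧ IsProperColoring G c}

/-- The Grundy number `Γ`. -/
noncomputable def grundyNumber {V : Type*} (G : SimpleGraph V) : ℕ :=
  sSup {k | ∃ c, IsGrundyColoring G c k}

/-- The chromatic number `χ` (as a natural number). -/
noncomputable def chromNumber {V : Type*} (G : SimpleGraph V) : ℕ :=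
  sInf {k | ∃ c : V → ℕ, (∀ v, c v < k) ∧ IsProperColoring G c}

/-- The clique number `ω`. -/
noncomputable def cliqueNumber {V : Type*} (G : SimpleGraph V) : ℕ :=
  sSup {n | ∃ s : Finset V, G.IsNClique n s}

/-- `G` is `H`-free: no induced subgraph of `G` is isomorphic to `H`. -/
def GraphFree {V W : Type*} (G : SimpleGraph V) (H : SimpleGraph W) : Prop :=
  ∀ s : Set V, IsEmpty ((G.induce s) ≃g H)

/-- `G` is `ωψ`-perfect. -/
def OmegaPsiPerfect {V : Type*} (G : SimpleGraph V) : Prop :=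
  ∀ s : Set V, cliqueNumber (G.induce s) = pseudoachromaticNumber (G.induce s)

/-- `G` is `χψ`-perfect. -/
def ChiPsiPerfect {V : Type*} (G : SimpleGraph V) : Prop :=
  ∀ s : Set V, chromNumber (G.induce s) = pseudoachromaticNumber (G.induce s)

/-- The path on 4 vertices. -/
def pathP4 : SimpleGraph (Fin 4) :=
  SimpleGraph.fromRel (fun a b => (b : ℕ) = (a : ℕ) + 1)

/-- The cycle on 4 vertices. -/
def cycleC4 : SimpleGraph (Fin 4) :=
  SimpleGraph.fromRel (fun a b => b = a + 1)

/-- The disjoint union of a path on 3 vertices and an edge. -/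
def graphP3K2 : SimpleGraph (Fin 5) :=
  SimpleGraph.fromRel (fun a b => (a, b) ∈ [((0 : Fin 5), (1 : Fin 5)), (1, 2), (3, 4)])

/-- The disjoint union of three edges. -/
def graph3K2 : SimpleGraph (Fin 6) :=
  SimpleGraph.fromRel (fun a b => (a, b) ∈ [((0 : Fin 6), (1 : Fin 6)), (2, 3), (4, 5)])

/-- The join of two graphs. -/
def graphJoin {V W : Type*} (G : SimpleGraph V) (H : SimpleGraph W) : SimpleGraph (V ⊕ W) :=
  SimpleGraph.fromRel (fun x y =>
    match x, y with
    | Sum.inl a, Sum.inl b => G.Adj a b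
    | Sum.inr a, Sum.inr b => H.Adj a b
    | _, _ => True)

/-- The disjoint union of two graphs. -/
def graphSum {V W : Type*} (G : SimpleGraph V) (H : SimpleGraph W) : SimpleGraph (V ⊕ W) :=
  SimpleGraph.fromRel (fun x y =>
    match x, y with
    | Sum.inl a, Sum.inl b => G.Adj a b
    | Sum.inr a, Sum.inr b => H.Adj a b
    | _, _ => False)

/-- The disjoint union of a family of graphs. -/
def graphSigma {ι : Type} {U : ι → Type} (f : ∀ i, SimpleGraph (U i)) :
    SimpleGraph (Σ i, U i) :=
  SimpleGraph.fromRel (fun x y => ∃ h : x.1 = y.1, (f y.1).Adj (h ▸ x.2) y.2)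

/-! Take `v` of maximum degree and suppose it is not universal. By connectivity there is a path
`v - x - y` with `y` neither equal nor adjacent to `v`. A neighbour `z ≠ x` of `v` not adjacent
to `x` would make `z v x y` an induced `P₄` or `C₄`, so `N(v) - x ⊆ N(x) - v`; since `y` lies in
`N(x) - v` but not in `N(v)`, this gives `deg v < deg x`, contradicting maximality. -/

theorem injective_quadruple {α : Type*} {a b c d : α} (hab : a ≠ b) (hac : a ≠ c) (had : a ≠ d)
    (hbc : b ≠ c) (hbd : b ≠ d) (hcd : c ≠ d) : Function.Injective ![a, b, c, d] := by
  simp [Function.Injective, Fin.forall_fin_succ, *, Ne.symm]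

namespace SimpleGraph

variable {V : Type*} {G : SimpleGraph V}

theorem GraphFree.not_isIndContained {W : Type*} {H : SimpleGraph W} (h : GraphFree G H) :
    ¬ H ⊴ G := fun ⟨f⟩ => (h _).false f.isoInduceRange.symm

theorem pathP4_isIndContained {a b c d : V} (hab : G.Adj a b) (hbc : G.Adj b c)
    (hcd : G.Adj c d) (hac : ¬ G.Adj a c) (hbd : ¬ G.Adj b d) (had : ¬ G.Adj a d) :
    pathP4 ⊴ G := by
  have hinj := injective_quadruple hab.ne (fun h => had (h ▸ hcd)) (fun h => hac (h ▸ hcd.symm))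
    hbc.ne (fun h => had (h ▸ hab)) hcd.ne
  refine ⟨⟨⟨_, hinj⟩, fun {i j} => ?_⟩⟩
  fin_cases i <;> fin_cases j <;> simp [pathP4] <;> grind [G.adj_comm]

theorem cycleC4_isIndContained {a b c d : V} (hab : G.Adj a b) (hbc : G.Adj b c)
    (hcd : G.Adj c d) (hda : G.Adj d a) (hac : ¬ G.Adj a c) (hbd : ¬ G.Adj b d)
    (hne_ac : a ≠ c) (hne_bd : b ≠ d) : cycleC4 ⊴ G := by
  have hinj := injective_quadruple hab.ne hne_ac hda.ne' hbc.ne hne_bd hcd.ne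
  refine ⟨⟨⟨_, hinj⟩, fun {i j} => ?_⟩⟩
  fin_cases i <;> fin_cases j <;> simp [cycleC4] <;> grind [G.adj_comm]

theorem Connected.exists_adj_adj_not_adj {v w : V} (hc : G.Connected) (hvw : v ≠ w)
    (hnadj : ¬ G.Adj v w) : ∃ x y, G.Adj v x ∧ G.Adj x y ∧ v ≠ y ∧ ¬ G.Adj v y := by
  obtain ⟨d, -, hd, hd'⟩ :=
    (hc v w).some.exists_boundary_dart {z | v = z ∨ G.Adj v z} (Or.inl rfl) (by simp [*])
  simp only [Set.mem_ofPred_eq, not_or] at hd hd'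
  rcases hd with rfl | hvx
  · exact absurd d.adj hd'.2
  · exact ⟨_, _, hvx, d.adj, hd'⟩

variable [Fintype V] [DecidableRel G.Adj]

theorem degree_lt_degree_of_neighbor_subset {v x y : V} (hvx : G.Adj v x)
    (hsub : ∀ z, G.Adj v z → z ≠ x → G.Adj x z) (hxy : G.Adj x y) (hvy : v ≠ y)
    (hnvy : ¬ G.Adj v y) : G.degree v < G.degree x := by
  classical
  have hssub : (G.neighborFinset v).erase x ⊂ (G.neighborFinset x).erase v := by
    refine Finset.ssubset_iff_of_subset (fun z hz => ?_) |>.2 ⟨y, ?_, ?_⟩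
    · simp only [Finset.mem_erase, mem_neighborFinset] at hz ⊢
      exact ⟨hz.2.ne', hsub z hz.2 hz.1⟩
    · simpa [hvy.symm] using hxy
    · simp [hnvy]
  have hcard := Finset.card_lt_card hssub
  rw [Finset.card_erase_of_mem (by simpa), Finset.card_erase_of_mem (by simpa using hvx.symm),
    card_neighborFinset_eq_degree, card_neighborFinset_eq_degree] at hcard
  have hpos : 0 < G.degree v := G.degree_pos_iff_exists_adj v |>.2 ⟨x, hvx⟩
  omega

theorem isUniversal_of_forall_degree_le {v : V} (hc : G.Connected)
    (hC4 : GraphFree G cycleC4) (hP4 : GraphFree G pathP4)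
    (hmax : ∀ w, G.degree w ≤ G.degree v) : G.IsUniversal v := by
  intro w hvw
  by_contra hnadj
  obtain ⟨x, y, hvx, hxy, hvy, hnvy⟩ := hc.exists_adj_adj_not_adj hvw hnadj
  by_cases hz : ∃ z, G.Adj v z ∧ z ≠ x ∧ ¬ G.Adj x z
  · obtain ⟨z, hvz, hzx, hnxz⟩ := hz
    by_cases hzy : G.Adj z y
    · exact hC4.not_isIndContained <| cycleC4_isIndContained hvz.symm hvx hxy hzy.symm
        (fun h => hnxz h.symm) hnvy hzx hvy
    · exact hP4.not_isIndContained <| pathP4_isIndContained hvz.symm hvx hxy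
        (fun h => hnxz h.symm) hnvy hzy
  · push Not at hz
    exact (hmax x).not_gt <| degree_lt_degree_of_neighbor_subset hvx hz hxy hvy hnvy

end SimpleGraph

theorem stmt_6 {V : Type*} [Fintype V] (G : SimpleGraph V) [DecidableRel G.Adj]
    (hc : G.Connected) (hC4 : GraphFree G cycleC4) (hP4 : GraphFree G pathP4) :
    ∃ v : V, G.degree v = Fintype.card V - 1 := by
  have : Nonempty V := hc.nonempty
  obtain ⟨v, -, hv⟩ := Finset.univ.exists_max_image (G.degree ·) Finset.univ_nonempty
  exact ⟨v, (G.degree_eq_card_sub_one v).2 <|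
    isUniversal_of_forall_degree_le hc hC4 hP4 fun w => hv w (Finset.mem_univ w)⟩
end

section
/- A connected graph G is (C₄,P₄)-free if and only if G is a complete graph, or there exist m ≥ 1, k ≥ 2, and connected (C₄,P₄)-free graphs G₁,...,G_k such that G is the join of the complete graph K_m with the disjoint union G₁ ∪ ... ∪ G_k. -/
open SimpleGraph

/-! In a connected (C₄,P₄)-free graph two non-adjacent vertices have a common neighbour, and
then a vertex of maximum degree is adjacent to all other vertices. The universal vertices span
a clique joined to everything else; the rest of the graph is again (C₄,P₄)-free, and it cannot
be connected, since a universal vertex of it would be universal in the whole graph. So it is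
the disjoint union of at least two connected components. Conversely, an induced P₄ or C₄ is
connected and each of its vertices has a non-neighbour, so in `K_m ⊕ (G₁ ∪ ⋯ ∪ G_k)` it avoids
the clique and lies inside a single `Gᵢ`. -/

open Function

section GraphFree

variable {V W : Type*} {G : SimpleGraph V} {H : SimpleGraph W}

lemma graphFree_iff_not_isIndContained : GraphFree G H ↔ ¬ H ⊴ G := by
  simp only [GraphFree, isIndContained_iff_exists_iso_induce, not_exists, not_nonempty_iff]
  exact forall_congr' fun s =>
    ⟨fun h => ⟨fun e => h.false e.symm⟩, fun h => ⟨fun e => h.false e.symm⟩⟩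

lemma GraphFree.of_embedding {U : Type*} {F : SimpleGraph U} (h : GraphFree G H)
    (f : F ↪g G) : GraphFree F H := by
  rw [graphFree_iff_not_isIndContained] at h ⊢
  exact fun hF => h (hF.trans f.isIndContained)

lemma not_graphFree_of_forall_adj_iff {n : ℕ} {H : SimpleGraph (Fin n)} (f : Fin n → V)
    (hf : Injective f) (hadj : ∀ i j, G.Adj (f i) (f j) ↔ H.Adj i j) : ¬ GraphFree G H := by
  rw [graphFree_iff_not_isIndContained, not_not]
  exact ⟨⟨⟨f, hf⟩, hadj _ _⟩⟩

lemma GraphFree.adj_of_path (h : GraphFree G pathP4) {a b c d : V} (hab : G.Adj a b)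
    (hbc : G.Adj b c) (hcd : G.Adj c d) (hac : ¬ G.Adj a c) (hbd : ¬ G.Adj b d) : G.Adj a d := by
  by_contra had
  have := hab.ne; have := hbc.ne; have := hcd.ne
  have : a ≠ c := by rintro rfl; exact had hcd
  have : a ≠ d := by rintro rfl; exact hac hcd.symm
  have : b ≠ d := by rintro rfl; exact had hab
  refine not_graphFree_of_forall_adj_iff ![a, b, c, d] ?_ ?_ h
  · intro i j
    fin_cases i <;> fin_cases j <;> simp_all [eq_comm]
  · intro i j
    fin_cases i <;> fin_cases j <;> simp_all [pathP4, G.adj_comm]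

lemma GraphFree.adj_or_adj_of_cycle (h : GraphFree G cycleC4) {a b c d : V} (hab : G.Adj a b)
    (hbc : G.Adj b c) (hcd : G.Adj c d) (hda : G.Adj d a) (hac : a ≠ c) (hbd : b ≠ d) :
    G.Adj a c ∨ G.Adj b d := by
  by_contra! hdiag
  have := hab.ne; have := hbc.ne; have := hcd.ne; have := hda.ne
  refine not_graphFree_of_forall_adj_iff ![a, b, c, d] ?_ ?_ h
  · intro i j
    fin_cases i <;> fin_cases j <;> simp_all [eq_comm]
  · intro i j
    fin_cases i <;> fin_cases j <;> simp_all [cycleC4, G.adj_comm]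

end GraphFree

section UniversalVertices

variable {V : Type*} {G : SimpleGraph V}

def universalVertices (G : SimpleGraph V) : Set V := {v | ∀ u, u ≠ v → G.Adj v u}

lemma GraphFree.exists_adj_adj_of_reachable (h : GraphFree G pathP4) {u v : V}
    (huv : G.Reachable u v) (hne : u ≠ v) (hnadj : ¬ G.Adj u v) :
    ∃ w, G.Adj u w ∧ G.Adj w v := by
  obtain ⟨p⟩ := huv
  induction p with
  | nil => exact absurd rfl hne
  | @cons u x v hux p ih =>
    by_cases hxv : G.Adj x v
    · exact ⟨x, hux, hxv⟩
    have hxv' : x ≠ v := by rintro rfl; exact hnadj hux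
    obtain ⟨w, hxw, hwv⟩ := ih hxv' hxv
    by_cases huw : G.Adj u w
    · exact ⟨w, huw, hwv⟩
    · exact absurd (h.adj_of_path hux hxw hwv huw hxv) hnadj

/-- A vertex of maximum degree is universal: a non-neighbour `u` of it shares a neighbour `w`
with it, and `w` is then adjacent to `u`, to `v` and to every other neighbour of `v`. -/
lemma SimpleGraph.Connected.exists_mem_universalVertices [Finite V] (hc : G.Connected)
    (hP4 : GraphFree G pathP4) (hC4 : GraphFree G cycleC4) : ∃ v, v ∈ universalVertices G := by
  classical
  have := Fintype.ofFinite V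
  obtain ⟨v, -, hmax⟩ := Finset.exists_max_image Finset.univ (fun v => G.degree v)
    (Finset.univ_nonempty_iff.mpr hc.nonempty)
  refine ⟨v, fun u hu => ?_⟩
  by_contra hvu
  obtain ⟨w, hvw, hwu⟩ := hP4.exists_adj_adj_of_reachable (hc v u) (Ne.symm hu) hvu
  have hw : ∀ x, G.Adj v x → x ≠ w → G.Adj w x := fun x hvx hxw => by
    by_contra hwx
    have hxu : G.Adj x u := hP4.adj_of_path hvx.symm hvw hwu (fun h => hwx h.symm) hvu
    exact (hC4.adj_or_adj_of_cycle hvx hxu hwu.symm hvw.symm (Ne.symm hu) hxw).elim hvu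
      (fun h => hwx h.symm)
  have hsub : insert v ((G.neighborFinset v).erase w) ⊂ G.neighborFinset w := by
    refine (Finset.ssubset_iff_of_subset ?_).mpr ⟨u, by simpa using hwu, ?_⟩
    · intro x hx
      simp only [Finset.mem_insert, Finset.mem_erase, mem_neighborFinset] at hx ⊢
      rcases hx with rfl | ⟨hxw, hvx⟩
      · exact hvw.symm
      · exact hw x hvx hxw
    · simp [hu, hvu]
  have hcard := Finset.card_lt_card hsub
  rw [Finset.card_insert_of_notMem (by simp), Finset.card_erase_add_one (by simpa using hvw),
    card_neighborFinset_eq_degree, card_neighborFinset_eq_degree] at hcard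
  exact (hmax w (Finset.mem_univ w)).not_gt hcard

end UniversalVertices

section Join

variable {V₁ V₂ W₁ W₂ : Type*} {G₁ : SimpleGraph V₁} {G₂ : SimpleGraph V₂}

@[simp] lemma graphJoin_adj_inl_inl {a b : V₁} :
    (graphJoin G₁ G₂).Adj (.inl a) (.inl b) ↔ G₁.Adj a b := by
  simpa [graphJoin, G₁.adj_comm b a] using fun h : G₁.Adj a b => h.ne

@[simp] lemma graphJoin_adj_inr_inr {a b : V₂} :
    (graphJoin G₁ G₂).Adj (.inr a) (.inr b) ↔ G₂.Adj a b := by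
  simpa [graphJoin, G₂.adj_comm b a] using fun h : G₂.Adj a b => h.ne

@[simp] lemma graphJoin_adj_inl_inr {a : V₁} {b : V₂} :
    (graphJoin G₁ G₂).Adj (.inl a) (.inr b) := by
  simp [graphJoin]

@[simp] lemma graphJoin_adj_inr_inl {a : V₂} {b : V₁} :
    (graphJoin G₁ G₂).Adj (.inr a) (.inl b) := by
  simp [graphJoin]

def graphJoinCongr {H₁ : SimpleGraph W₁} {H₂ : SimpleGraph W₂} (e₁ : G₁ ≃g H₁)
    (e₂ : G₂ ≃g H₂) : graphJoin G₁ G₂ ≃g graphJoin H₁ H₂ where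
  toEquiv := Equiv.sumCongr e₁.toEquiv e₂.toEquiv
  map_rel_iff' := by rintro (a | a) (b | b) <;> simp [e₁.map_adj_iff, e₂.map_adj_iff]

end Join

section Sigma

variable {ι : Type} {U : ι → Type} {Gs : ∀ i, SimpleGraph (U i)}

@[simp] lemma graphSigma_adj_mk_mk {i : ι} {a b : U i} :
    (graphSigma Gs).Adj ⟨i, a⟩ ⟨i, b⟩ ↔ (Gs i).Adj a b := by
  simpa [graphSigma, (Gs i).adj_comm b a] using fun h : (Gs i).Adj a b => h.ne

lemma graphSigma_adj_fst_eq {x y : Σ i, U i} (h : (graphSigma Gs).Adj x y) : x.1 = y.1 := by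
  obtain ⟨-, ⟨hxy, -⟩ | ⟨hyx, -⟩⟩ := h
  exacts [hxy, hyx.symm]

end Sigma

section FreeOfJoin

variable {V W : Type*} {G : SimpleGraph V} {H : SimpleGraph W}

lemma graphFree_of_forall_adj [Nonempty W] (hG : ∀ u v, u ≠ v → G.Adj u v)
    (hH : ∀ a, ∃ b, a ≠ b ∧ ¬ H.Adj a b) : GraphFree G H := by
  rw [graphFree_iff_not_isIndContained]
  rintro ⟨f⟩
  obtain ⟨b, hab, hnadj⟩ := hH (Classical.arbitrary W)
  exact hnadj (f.map_adj_iff.mp (hG _ _ (f.injective.ne hab)))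

lemma GraphFree.graphJoin_completeGraph (α : Type*) (h : GraphFree G H)
    (hH : ∀ a, ∃ b, a ≠ b ∧ ¬ H.Adj a b) :
    GraphFree (graphJoin (completeGraph α) G) H := by
  rw [graphFree_iff_not_isIndContained] at h ⊢
  rintro ⟨f⟩
  have hright : ∀ a, ∃ x, f a = .inr x := fun a => by
    obtain ⟨b, hab, hnadj⟩ := hH a
    rcases hfa : f a with p | x
    · refine absurd ?_ hnadj
      rw [← f.map_adj_iff, hfa]
      rcases hfb : f b with q | y
      · exact graphJoin_adj_inl_inl.mpr fun hpq => hab (f.injective (by rw [hfa, hfb, hpq]))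
      · exact graphJoin_adj_inl_inr
    · exact ⟨x, rfl⟩
  choose g hg using hright
  exact h ⟨⟨⟨g, fun a b hab => f.injective (by rw [hg, hg, hab])⟩,
    fun {a b} => by rw [← f.map_adj_iff, hg, hg, graphJoin_adj_inr_inr]; rfl⟩⟩

lemma GraphFree.graphSigma {ι : Type} {U : ι → Type} {Gs : ∀ i, SimpleGraph (U i)}
    (hH : H.Connected) (h : ∀ i, GraphFree (Gs i) H) : GraphFree (graphSigma Gs) H := by
  simp only [graphFree_iff_not_isIndContained] at h ⊢
  rintro ⟨f⟩
  obtain ⟨a₀⟩ := hH.nonempty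
  obtain ⟨i, hi⟩ : ∃ i, ∀ a, (f a).1 = i := ⟨(f a₀).1, fun a => by
    obtain ⟨p⟩ := hH.preconnected a a₀
    induction p with
    | nil => rfl
    | cons hab _ ih => exact (graphSigma_adj_fst_eq (f.map_adj_iff.mpr hab)).trans ih⟩
  have hmk : ∀ a, ∃ x, f a = ⟨i, x⟩ := fun a => by
    rcases hfa : f a with ⟨j, x⟩
    obtain rfl : j = i := by simpa [hfa] using hi a
    exact ⟨x, rfl⟩
  choose g hg using hmk
  exact h i ⟨⟨⟨g, fun a b hab => f.injective (by rw [hg, hg, hab])⟩,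
    fun {a b} => by rw [← f.map_adj_iff, hg, hg, graphSigma_adj_mk_mk]; rfl⟩⟩

end FreeOfJoin

section Decomposition

variable {V W : Type*}

open scoped Classical in
noncomputable def graphJoinUniversalVerticesIso (G : SimpleGraph V) :
    graphJoin (completeGraph (universalVertices G)) (G.induce (universalVertices G)ᶜ) ≃g G where
  toEquiv := Equiv.Set.sumCompl (universalVertices G)
  map_rel_iff' := by
    rintro (⟨a, ha⟩ | ⟨a, ha⟩) (⟨b, hb⟩ | ⟨b, hb⟩)
    · simpa [Subtype.ext_iff] using ⟨fun h => h.ne, fun hab => ha b (Ne.symm hab)⟩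
    · simpa using ha b (by rintro rfl; exact hb ha)
    · simpa using (hb a (by rintro rfl; exact ha hb)).symm
    · simp

lemma not_preconnected_induce_compl_universalVertices [Finite V] {G : SimpleGraph V}
    (hP4 : GraphFree G pathP4) (hC4 : GraphFree G cycleC4) {u : V}
    (hu : u ∉ universalVertices G) :
    ¬ (G.induce (universalVertices G)ᶜ).Preconnected := by
  intro hpre
  have hconn : (G.induce (universalVertices G)ᶜ).Connected :=
    (connected_iff _).mpr ⟨hpre, ⟨⟨u, hu⟩⟩⟩
  obtain ⟨⟨x, hx⟩, hxu⟩ := hconn.exists_mem_universalVertices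
    (hP4.of_embedding (Embedding.induce _)) (hC4.of_embedding (Embedding.induce _))
  refine hx fun y hyx => ?_
  by_cases hy : y ∈ universalVertices G
  · exact (hy x (Ne.symm hyx)).symm
  · exact hxu ⟨y, hy⟩ (fun h => hyx (congrArg Subtype.val h))

variable {ι : Type} {U : ι → Type}

def graphSigmaFiberIso (H : SimpleGraph W) (p : W → ι) (hp : ∀ x y, H.Adj x y → p x = p y)
    (e : ∀ i, {x // p x = i} ≃ U i) :
    graphSigma (fun i => H.comap ((e i).symm.toEmbedding.trans (Function.Embedding.subtype _)))
      ≃g H where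
  toEquiv := (Equiv.sigmaCongrRight e).symm.trans (Equiv.sigmaFiberEquiv p)
  map_rel_iff' := by
    rintro ⟨i, a⟩ ⟨j, b⟩
    by_cases hij : i = j
    · subst hij
      rw [graphSigma_adj_mk_mk]
      rfl
    · refine iff_of_false (fun h => hij ?_) (fun h => hij (graphSigma_adj_fst_eq h))
      exact ((e i).symm a).2.symm.trans ((hp _ _ h).trans ((e j).symm b).2)

lemma exists_iso_graphSigma_connected [Finite W] (H : SimpleGraph W) :
    ∃ (U : Fin (Nat.card H.ConnectedComponent) → Type) (_ : ∀ i, Fintype (U i))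
      (Gs : ∀ i, SimpleGraph (U i)),
      (∀ i, (Gs i).Connected ∧ Nonempty (Gs i ↪g H)) ∧ Nonempty (H ≃g graphSigma Gs) := by
  let ek := Finite.equivFin H.ConnectedComponent
  let p x := ek (H.connectedComponentMk x)
  have hp : ∀ x y, H.Adj x y → p x = p y := fun x y h => by
    simp only [p, ConnectedComponent.connectedComponentMk_eq_of_adj h]
  let e i := Finite.equivFin {x // p x = i}
  refine ⟨_, fun _ => inferInstance, _, fun i => ⟨?_, ⟨Embedding.comap _ H⟩⟩,
    ⟨(graphSigmaFiberIso H p hp e).symm⟩⟩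
  have hfiber : {x | p x = i} = (ek.symm i).supp := by
    ext x
    simp [p, ConnectedComponent.mem_supp_iff, Equiv.eq_symm_apply]
  have hconn : (H.induce {x | p x = i}).Connected :=
    hfiber ▸ (ek.symm i).connected_toSimpleGraph
  exact (Iso.comap (e i).symm (H.induce {x | p x = i})).symm.connected_iff.mp hconn

end Decomposition

lemma pathP4_connected : pathP4.Connected := by
  have : pathP4 = pathGraph 4 := by
    ext a b
    simp only [pathP4, fromRel_adj, pathGraph_adj, ne_eq, Fin.ext_iff]
    omega
  exact this ▸ pathGraph_connected 3

lemma cycleC4_connected : cycleC4.Connected := by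
  have : cycleC4 = cycleGraph 4 := by
    ext a b
    fin_cases a <;> fin_cases b <;> simp [cycleC4, cycleGraph_adj] <;> decide
  exact this ▸ cycleGraph_connected

lemma pathP4_exists_not_adj (a : Fin 4) : ∃ b, a ≠ b ∧ ¬ pathP4.Adj a b := by
  revert a
  simp only [pathP4, fromRel_adj]
  decide

lemma cycleC4_exists_not_adj (a : Fin 4) : ∃ b, a ≠ b ∧ ¬ cycleC4.Adj a b := by
  revert a
  simp only [cycleC4, fromRel_adj]
  decide

theorem stmt_7 {V : Type*} [Fintype V] (G : SimpleGraph V) (hc : G.Connected) :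
    (GraphFree G cycleC4 ∧ GraphFree G pathP4) ↔
      ((∀ u v : V, u ≠ v → G.Adj u v) ∨
        ∃ (k m : ℕ), 2 ≤ k ∧ 1 ≤ m ∧
          ∃ (U : Fin k → Type) (_ : ∀ i, Fintype (U i)) (Gs : ∀ i, SimpleGraph (U i)),
            (∀ i, (Gs i).Connected ∧ GraphFree (Gs i) cycleC4 ∧ GraphFree (Gs i) pathP4) ∧
              Nonempty (G ≃g graphJoin (completeGraph (Fin m)) (graphSigma Gs))) := by
  constructor
  · rintro ⟨hC4, hP4⟩
    by_cases hcomplete : ∀ u v : V, u ≠ v → G.Adj u v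
    · exact Or.inl hcomplete
    right
    obtain ⟨u, hu⟩ : ∃ u, u ∉ universalVertices G := by
      simpa [universalVertices, ne_comm] using hcomplete
    obtain ⟨v, hv⟩ := hc.exists_mem_universalVertices hP4 hC4
    have : Nonempty (universalVertices G) := ⟨⟨v, hv⟩⟩
    obtain ⟨U, hU, Gs, hGs, ⟨e⟩⟩ :=
      exists_iso_graphSigma_connected (G.induce (universalVertices G)ᶜ)
    refine ⟨_, _, ?_, Nat.card_pos, U, hU, Gs, fun i => ⟨(hGs i).1,
      hC4.of_embedding ((Embedding.induce _).comp (hGs i).2.some),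
      hP4.of_embedding ((Embedding.induce _).comp (hGs i).2.some)⟩,
      ⟨(graphJoinUniversalVerticesIso G).symm.trans
        (graphJoinCongr (Iso.completeGraph (Finite.equivFin _)) e)⟩⟩
    by_contra! hcard
    have := Finite.card_le_one_iff_subsingleton.mp (Nat.le_of_lt_succ hcard)
    exact not_preconnected_induce_compl_universalVertices hP4 hC4 hu fun x y =>
      ConnectedComponent.exact (Subsingleton.elim _ _)
  · rintro (hcomplete | ⟨k, m, -, -, U, -, Gs, hGs, ⟨e⟩⟩)
    · exact ⟨graphFree_of_forall_adj hcomplete cycleC4_exists_not_adj,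
        graphFree_of_forall_adj hcomplete pathP4_exists_not_adj⟩
    · exact ⟨((GraphFree.graphSigma cycleC4_connected fun i => (hGs i).2.1)
          |>.graphJoin_completeGraph _ cycleC4_exists_not_adj).of_embedding e.toEmbedding,
        ((GraphFree.graphSigma pathP4_connected fun i => (hGs i).2.2)
          |>.graphJoin_completeGraph _ pathP4_exists_not_adj).of_embedding e.toEmbedding⟩
end

section
/- If H is an empty graph, or a graph whose components are isolated vertices together with at most one non-trivial complete graph, or isolated vertices together with exactly two non-trivial complete graphs, then ω(H) = ψ(H). -/
open SimpleGraph

/-!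
Colouring a maximum clique bijectively gives `ω ≤ ψ` for every finite graph. Conversely, if every
edge lies inside one of two cliques `A`, `B`, then a complete colouring with at least two colours
shows all of its colours on `A` or all of them on `B`; one vertex of each colour then forms a
clique, so the number of colours is at most `ω`.
-/

namespace SimpleGraph

variable {V : Type*} {G : SimpleGraph V}

lemma cliqueNumber_eq_cliqueNum (G : SimpleGraph V) : cliqueNumber G = G.cliqueNum := rfl

lemma IsCompleteColoring.le_card [Finite V] {c : V → ℕ} {k : ℕ} (hc : IsCompleteColoring G c k) :
    k ≤ Nat.card V := by
  choose f hf using hc.2.1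
  have hinj : Function.Injective (fun i : Fin k => f i i.2) := fun i j hij =>
    Fin.ext (by simpa only [hf] using congrArg c hij)
  simpa using Nat.card_le_card_of_injective _ hinj

lemma bddAbove_completeColorings [Finite V] (G : SimpleGraph V) :
    BddAbove {k | ∃ c, IsCompleteColoring G c k} :=
  ⟨Nat.card V, fun _ ⟨_, hc⟩ => hc.le_card⟩

lemma IsNClique.exists_isCompleteColoring {s : Finset V} {n : ℕ} (hs : G.IsNClique n s)
    (hn : 0 < n) : ∃ c, IsCompleteColoring G c n := by
  classical
  let e := Finset.equivFinOfCardEq hs.card_eq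
  let c : V → ℕ := fun v => if h : v ∈ s then e ⟨v, h⟩ else 0
  have hc : ∀ i : Fin n, c (e.symm i) = i := fun i => by
    simp [c, (e.symm i).2]
  refine ⟨c, fun v => ?_, fun i hi => ⟨_, hc ⟨i, hi⟩⟩, fun i j hi hj hij => ?_⟩
  · by_cases h : v ∈ s
    · simp [c, h]
    · simpa [c, h] using hn
  · refine ⟨e.symm ⟨i, hi⟩, e.symm ⟨j, hj⟩, hs.isClique (e.symm _).2 (e.symm _).2 ?_,
      hc ⟨i, hi⟩, hc ⟨j, hj⟩⟩
    simpa [Subtype.val_inj] using hij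

lemma cliqueNumber_le_pseudoachromaticNumber [Finite V] (G : SimpleGraph V) :
    cliqueNumber G ≤ pseudoachromaticNumber G := by
  obtain ⟨s, hs⟩ := G.exists_isNClique_cliqueNum
  rw [cliqueNumber_eq_cliqueNum]
  rcases Nat.eq_zero_or_pos G.cliqueNum with h | h
  · exact h ▸ Nat.zero_le _
  exact le_csSup G.bddAbove_completeColorings (hs.exists_isCompleteColoring h)

lemma le_cliqueNum_of_forall_color_mem_clique [Finite V] {A : Set V} (hA : G.IsClique A)
    {c : V → ℕ} {k : ℕ} (hcol : ∀ i < k, ∃ v ∈ A, c v = i) : k ≤ G.cliqueNum := by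
  classical
  choose f hfA hfc using hcol
  have hinj : Function.Injective (fun i : Fin k => f i i.2) := fun i j hij =>
    Fin.ext (by simpa only [hfc] using congrArg c hij)
  have hclique : G.IsClique (Finset.univ.image fun i : Fin k => f i i.2 : Set V) :=
    hA.subset (by simp [Set.range_subset_iff, hfA])
  simpa [Finset.card_image_of_injective _ hinj] using hclique.card_le_cliqueNum

/-- A colour `i` missing from `A` and a colour `j` missing from `B` would leave no room for an edge
joining them (or, if `i = j`, for any edge at colour `i`). -/
lemma IsCompleteColoring.forall_color_mem_or {c : V → ℕ} {k : ℕ} (hc : IsCompleteColoring G c k)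
    (hk : 2 ≤ k) {A B : Set V} (hcov : ∀ u v, G.Adj u v → (u ∈ A ∧ v ∈ A) ∨ (u ∈ B ∧ v ∈ B)) :
    (∀ i < k, ∃ v ∈ A, c v = i) ∨ (∀ i < k, ∃ v ∈ B, c v = i) := by
  by_contra! ⟨⟨i, hi, hiA⟩, ⟨j, hj, hjB⟩⟩
  by_cases hij : i = j
  · subst hij
    obtain ⟨u, w, hadj, hu, -⟩ :=
      hc.2.2 i (if i = 0 then 1 else 0) hi (by split_ifs <;> omega) (by split_ifs <;> omega)
    rcases hcov u w hadj with ⟨huA, -⟩ | ⟨huB, -⟩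
    exacts [hiA u huA hu, hjB u huB hu]
  · obtain ⟨u, w, hadj, hu, hw⟩ := hc.2.2 i j hi hj hij
    rcases hcov u w hadj with ⟨huA, -⟩ | ⟨-, hwB⟩
    exacts [hiA u huA hu, hjB w hwB hw]

lemma pseudoachromaticNumber_le_cliqueNumber_of_adj_mem_cliques [Finite V] {A B : Set V}
    (hA : G.IsClique A) (hB : G.IsClique B)
    (hcov : ∀ u v, G.Adj u v → (u ∈ A ∧ v ∈ A) ∨ (u ∈ B ∧ v ∈ B)) :
    pseudoachromaticNumber G ≤ cliqueNumber G := by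
  refine csSup_le' fun k ⟨c, hc⟩ => ?_
  obtain hk | hk := lt_or_ge k 2
  · obtain rfl | rfl : k = 0 ∨ k = 1 := by omega
    · exact Nat.zero_le _
    obtain ⟨v, hv⟩ := hc.2.1 0 one_pos
    exact le_cliqueNum_of_forall_color_mem_clique (isClique_singleton v) (c := c)
      fun i hi => ⟨v, rfl, by omega⟩
  rcases hc.forall_color_mem_or hk hcov with hcol | hcol
  exacts [le_cliqueNum_of_forall_color_mem_clique hA hcol,
    le_cliqueNum_of_forall_color_mem_clique hB hcol]

end SimpleGraph

theorem stmt_8 {W : Type*} [Fintype W] (H : SimpleGraph W)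
    (hstruct :
      (∀ u v : W, ¬ H.Adj u v) ∨
      (∃ A : Set W, (∀ u ∈ A, ∀ v ∈ A, u ≠ v → H.Adj u v) ∧
        (∀ u v : W, H.Adj u v → u ∈ A ∧ v ∈ A)) ∨
      (∃ A B : Set W, Disjoint A B ∧ A.Nontrivial ∧ B.Nontrivial ∧
        (∀ u ∈ A, ∀ v ∈ A, u ≠ v → H.Adj u v) ∧
        (∀ u ∈ B, ∀ v ∈ B, u ≠ v → H.Adj u v) ∧
        (∀ u v : W, H.Adj u v → (u ∈ A ∧ v ∈ A) ∨ (u ∈ B ∧ v ∈ B)))) :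
    cliqueNumber H = pseudoachromaticNumber H := by
  refine le_antisymm H.cliqueNumber_le_pseudoachromaticNumber ?_
  rcases hstruct with hempty | ⟨A, hA, hcov⟩ | ⟨A, B, -, -, -, hA, hB, hcov⟩
  · exact pseudoachromaticNumber_le_cliqueNumber_of_adj_mem_cliques (A := ∅) (B := ∅)
      (by simp) (by simp) fun u v h => absurd h (hempty u v)
  · exact pseudoachromaticNumber_le_cliqueNumber_of_adj_mem_cliques hA hA
      fun u v h => .inl (hcov u v h)
  · exact pseudoachromaticNumber_le_cliqueNumber_of_adj_mem_cliques hA hB hcov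
end

section
/- If H is the disjoint union of two complete graphs K_{m₁} and K_{m₂} with m₁, m₂ ≥ 1, then ψ(H) = max{m₁, m₂}. -/
open SimpleGraph

/-!
A complete coloring of a disjoint union `G ⊕ H` must show every color on one of the two sides:
if color `i` is missing on the left and color `j` on the right, then `i ≠ j` and no edge can
join them, since every edge lies within one side. Hence `ψ(K_{m₁} ⊔ K_{m₂}) ≤ max m₁ m₂`, and
coloring both cliques injectively by `0, 1, …` attains the bound.
-/

section Sum

variable {V W : Type*} {G : SimpleGraph V} {H : SimpleGraph W}

@[simp]
theorem graphSum_adj_inl_inl {a b : V} : (graphSum G H).Adj (.inl a) (.inl b) ↔ G.Adj a b := by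
  simp only [graphSum, fromRel_adj, ne_eq, Sum.inl.injEq]
  exact ⟨fun h => h.2.elim id G.adj_symm, fun h => ⟨h.ne, .inl h⟩⟩

@[simp]
theorem graphSum_adj_inr_inr {a b : W} : (graphSum G H).Adj (.inr a) (.inr b) ↔ H.Adj a b := by
  simp only [graphSum, fromRel_adj, ne_eq, Sum.inr.injEq]
  exact ⟨fun h => h.2.elim id H.adj_symm, fun h => ⟨h.ne, .inl h⟩⟩

@[simp]
theorem graphSum_not_adj_inl_inr {a : V} {b : W} : ¬(graphSum G H).Adj (.inl a) (.inr b) := by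
  simp [graphSum]

@[simp]
theorem graphSum_not_adj_inr_inl {a : W} {b : V} : ¬(graphSum G H).Adj (.inr a) (.inl b) := by
  simp [graphSum]

theorem IsCompleteColoring.sum_elim_left {c : V → ℕ} {d : W → ℕ} {k : ℕ}
    (hc : IsCompleteColoring G c k) (hd : ∀ w, d w < k) :
    IsCompleteColoring (graphSum G H) (Sum.elim c d) k := by
  obtain ⟨hlt, hsurj, hpair⟩ := hc
  refine ⟨Sum.rec hlt hd, fun i hi => ?_, fun i j hi hj hij => ?_⟩
  · obtain ⟨v, hv⟩ := hsurj i hi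
    exact ⟨.inl v, hv⟩
  · obtain ⟨u, w, hadj, hu, hw⟩ := hpair i j hi hj hij
    exact ⟨.inl u, .inl w, graphSum_adj_inl_inl.2 hadj, hu, hw⟩

theorem IsCompleteColoring.sum_elim_right {c : V → ℕ} {d : W → ℕ} {k : ℕ}
    (hc : ∀ v, c v < k) (hd : IsCompleteColoring H d k) :
    IsCompleteColoring (graphSum G H) (Sum.elim c d) k := by
  obtain ⟨hlt, hsurj, hpair⟩ := hd
  refine ⟨Sum.rec hc hlt, fun i hi => ?_, fun i j hi hj hij => ?_⟩
  · obtain ⟨v, hv⟩ := hsurj i hi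
    exact ⟨.inr v, hv⟩
  · obtain ⟨u, w, hadj, hu, hw⟩ := hpair i j hi hj hij
    exact ⟨.inr u, .inr w, graphSum_adj_inr_inr.2 hadj, hu, hw⟩

theorem IsCompleteColoring.forall_lt_exists_inl_or_forall_lt_exists_inr
    {c : V ⊕ W → ℕ} {k : ℕ} (hc : IsCompleteColoring (graphSum G H) c k) :
    (∀ i < k, ∃ a, c (.inl a) = i) ∨ (∀ i < k, ∃ b, c (.inr b) = i) := by
  obtain ⟨-, hsurj, hpair⟩ := hc
  by_contra! ⟨⟨i, hik, hi⟩, ⟨j, hjk, hj⟩⟩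
  have hij : i ≠ j := by
    rintro rfl
    obtain ⟨(a | b), hv⟩ := hsurj i hik
    exacts [hi a hv, hj b hv]
  obtain ⟨(a | a), (b | b), hadj, hu, hw⟩ := hpair i j hik hjk hij <;> simp_all

end Sum

theorem isCompleteColoring_completeGraph_val (n : ℕ) :
    IsCompleteColoring (completeGraph (Fin n)) Fin.val n :=
  ⟨Fin.isLt, fun i hi => ⟨⟨i, hi⟩, rfl⟩,
    fun i j hi hj hij => ⟨⟨i, hi⟩, ⟨j, hj⟩, by simpa [Fin.ext_iff] using hij, rfl, rfl⟩⟩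

theorem le_card_of_forall_lt_exists_eq {α : Type*} [Fintype α] {f : α → ℕ} {k : ℕ}
    (hf : ∀ i < k, ∃ a, f a = i) : k ≤ Fintype.card α := by
  classical
  calc k = (Finset.range k).card := (Finset.card_range k).symm
    _ ≤ (Finset.univ.image f).card :=
        Finset.card_le_card fun i hi => by simpa using hf i (Finset.mem_range.1 hi)
    _ ≤ Fintype.card α := Finset.card_image_le

theorem pseudoachromaticNumber_eq_of_isCompleteColoring {V : Type*} {G : SimpleGraph V} {k : ℕ}
    (hk : ∃ c, IsCompleteColoring G c k)
    (hle : ∀ k' c, IsCompleteColoring G c k' → k' ≤ k) :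
    pseudoachromaticNumber G = k :=
  IsGreatest.csSup_eq ⟨hk, fun k' ⟨c, hc⟩ => hle k' c hc⟩

theorem stmt_9_general (m₁ m₂ : ℕ) :
    pseudoachromaticNumber (graphSum (completeGraph (Fin m₁)) (completeGraph (Fin m₂))) =
      max m₁ m₂ := by
  apply pseudoachromaticNumber_eq_of_isCompleteColoring
  · rcases le_total m₂ m₁ with h | h
    · rw [max_eq_left h]
      exact ⟨_, (isCompleteColoring_completeGraph_val m₁).sum_elim_left
        (d := Fin.val) fun b => b.isLt.trans_le h⟩
    · rw [max_eq_right h]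
      exact ⟨_, IsCompleteColoring.sum_elim_right
        (c := Fin.val) (fun a => a.isLt.trans_le h) (isCompleteColoring_completeGraph_val m₂)⟩
  · intro k c hc
    rcases hc.forall_lt_exists_inl_or_forall_lt_exists_inr with h | h
    · exact (le_card_of_forall_lt_exists_eq h).trans (by simp)
    · exact (le_card_of_forall_lt_exists_eq h).trans (by simp)

theorem stmt_9 (m₁ m₂ : ℕ) (h₁ : 1 ≤ m₁) (h₂ : 1 ≤ m₂) :
    pseudoachromaticNumber (graphSum (completeGraph (Fin m₁)) (completeGraph (Fin m₂))) =
      max m₁ m₂ :=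
  stmt_9_general m₁ m₂
end

section
/- If G is χψ-perfect, then G is (C₄, P₄, P₃∪K₂, 3K₂)-free. -/
open SimpleGraph

/-! Each of `C₄`, `P₄`, `P₃ ∪ K₂`, `3K₂` is bipartite but has a complete 3-coloring, so
`χ < ψ` for it. Since `χ` and `ψ` are invariant under isomorphism, an induced copy of one of
them in `G` would be an induced subgraph on which `χ ≠ ψ`. -/

section Colorings

variable {V W : Type*} {G : SimpleGraph V} {H : SimpleGraph W}

lemma IsProperColoring.comp_hom {c : W → ℕ} (hc : IsProperColoring H c) (f : G →g H) :
    IsProperColoring G (c ∘ f) :=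
  fun _ _ huw => hc _ _ (f.map_adj huw)

lemma IsCompleteColoring.comp_iso {c : W → ℕ} {k : ℕ} (hc : IsCompleteColoring H c k)
    (e : G ≃g H) : IsCompleteColoring G (c ∘ e) k := by
  obtain ⟨hlt, hsurj, hpairs⟩ := hc
  refine ⟨fun v => hlt _, fun i hi => ?_, fun i j hi hj hij => ?_⟩
  · obtain ⟨v, hv⟩ := hsurj i hi
    exact ⟨e.symm v, by simp [hv]⟩
  · obtain ⟨u, w, huw, hu, hw⟩ := hpairs i j hi hj hij
    exact ⟨e.symm u, e.symm w, e.symm.map_adj_iff.mpr huw, by simp [hu], by simp [hw]⟩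

lemma isCompleteColoring_iff_forall_fin {c : V → ℕ} {k : ℕ} :
    IsCompleteColoring G c k ↔ (∀ v, c v < k) ∧ (∀ i : Fin k, ∃ v, c v = i) ∧
      ∀ i j : Fin k, i ≠ j → ∃ u w, G.Adj u w ∧ c u = i ∧ c w = j := by
  exact and_congr_right fun _ => and_congr ⟨fun h i => h i i.2, fun h i hi => h ⟨i, hi⟩⟩
    ⟨fun h i j hij => h i j i.2 j.2 (Fin.val_ne_of_ne hij),
      fun h i j hi hj hij => h ⟨i, hi⟩ ⟨j, hj⟩ (Fin.ne_of_val_ne hij)⟩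

lemma IsCompleteColoring.le_card [Fintype V] {c : V → ℕ} {k : ℕ}
    (hc : IsCompleteColoring G c k) : k ≤ Fintype.card V := by
  have hrange : Finset.range k ⊆ Finset.univ.image c := fun i hi => by
    obtain ⟨v, hv⟩ := hc.2.1 i (Finset.mem_range.mp hi)
    exact Finset.mem_image.mpr ⟨v, Finset.mem_univ v, hv⟩
  simpa using (Finset.card_le_card hrange).trans Finset.card_image_le

lemma le_pseudoachromaticNumber [Finite V] {c : V → ℕ} {k : ℕ}
    (hc : IsCompleteColoring G c k) : k ≤ pseudoachromaticNumber G := by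
  have := Fintype.ofFinite V
  exact le_csSup ⟨Fintype.card V, fun _ ⟨_, hc'⟩ => hc'.le_card⟩ ⟨c, hc⟩

lemma chromNumber_le {c : V → ℕ} {k : ℕ} (hlt : ∀ v, c v < k) (hc : IsProperColoring G c) :
    chromNumber G ≤ k :=
  Nat.sInf_le ⟨c, hlt, hc⟩

lemma SimpleGraph.Iso.pseudoachromaticNumber_eq (e : G ≃g H) :
    pseudoachromaticNumber G = pseudoachromaticNumber H := by
  unfold pseudoachromaticNumber
  congr 1
  ext k
  exact ⟨fun ⟨c, hc⟩ => ⟨c ∘ e.symm, hc.comp_iso e.symm⟩,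
    fun ⟨c, hc⟩ => ⟨c ∘ e, hc.comp_iso e⟩⟩

lemma SimpleGraph.Iso.chromNumber_eq (e : G ≃g H) : chromNumber G = chromNumber H := by
  unfold chromNumber
  congr 1
  ext k
  exact ⟨fun ⟨c, hlt, hc⟩ => ⟨c ∘ e.symm, fun _ => hlt _, hc.comp_hom e.symm.toHom⟩,
    fun ⟨c, hlt, hc⟩ => ⟨c ∘ e, fun _ => hlt _, hc.comp_hom e.toHom⟩⟩

lemma chromNumber_lt_pseudoachromaticNumber [Finite W] {c₂ c₃ : W → ℕ}
    (hlt : ∀ v, c₂ v < 2) (hc₂ : IsProperColoring H c₂) (hc₃ : IsCompleteColoring H c₃ 3) :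
    chromNumber H < pseudoachromaticNumber H :=
  (chromNumber_le hlt hc₂).trans_lt (le_pseudoachromaticNumber hc₃)

lemma ChiPsiPerfect.graphFree (hG : ChiPsiPerfect G)
    (hH : chromNumber H < pseudoachromaticNumber H) : GraphFree G H := fun s =>
  ⟨fun e => hH.ne (by rw [← e.chromNumber_eq, ← e.pseudoachromaticNumber_eq, hG s])⟩

end Colorings

instance : DecidableRel cycleC4.Adj := by unfold cycleC4; infer_instance
instance : DecidableRel pathP4.Adj := by unfold pathP4; infer_instance
instance : DecidableRel graphP3K2.Adj := by unfold graphP3K2; infer_instance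
instance : DecidableRel graph3K2.Adj := by unfold graph3K2; infer_instance

theorem stmt_11_general {V : Type*} (G : SimpleGraph V) (h : ChiPsiPerfect G) :
    GraphFree G cycleC4 ∧ GraphFree G pathP4 ∧ GraphFree G graphP3K2 ∧
      GraphFree G graph3K2 := by
  refine ⟨h.graphFree ?_, h.graphFree ?_, h.graphFree ?_, h.graphFree ?_⟩
  · exact chromNumber_lt_pseudoachromaticNumber (c₂ := ![0, 1, 0, 1]) (c₃ := ![0, 1, 2, 2])
      (by decide) (by unfold IsProperColoring; decide)
      (isCompleteColoring_iff_forall_fin.mpr (by decide))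
  · exact chromNumber_lt_pseudoachromaticNumber (c₂ := ![0, 1, 0, 1]) (c₃ := ![0, 1, 2, 0])
      (by decide) (by unfold IsProperColoring; decide)
      (isCompleteColoring_iff_forall_fin.mpr (by decide))
  · exact chromNumber_lt_pseudoachromaticNumber (c₂ := ![0, 1, 0, 0, 1]) (c₃ := ![0, 1, 2, 0, 2])
      (by decide) (by unfold IsProperColoring; decide)
      (isCompleteColoring_iff_forall_fin.mpr (by decide))
  · exact chromNumber_lt_pseudoachromaticNumber (c₂ := ![0, 1, 0, 1, 0, 1])
      (c₃ := ![0, 1, 0, 2, 1, 2]) (by decide) (by unfold IsProperColoring; decide)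
      (isCompleteColoring_iff_forall_fin.mpr (by decide))

theorem stmt_11 {V : Type*} [Fintype V] (G : SimpleGraph V) (h : ChiPsiPerfect G) :
    GraphFree G cycleC4 ∧ GraphFree G pathP4 ∧ GraphFree G graphP3K2 ∧
      GraphFree G graph3K2 :=
  stmt_11_general G h
end

section
/- Let G be a graph with vertices u ≠ v such that N(u) ⊆ N[v], and let G \ u be the induced subgraph on V(G) \ {u}. If ς is a complete coloring of G with k colors and ς(u) = ς(v), then G \ u admits a complete coloring with k colors. -/
open SimpleGraph

theorem stmt_14 {V : Type*} (G : SimpleGraph V) (u v : V) (huv : u ≠ v)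
    (hN : G.neighborSet u ⊆ insert v (G.neighborSet v))
    (c : V → ℕ) (k : ℕ) (hc : IsCompleteColoring G c k) (hcol : c u = c v) :
    ∃ c' : {x : V // x ≠ u} → ℕ,
      IsCompleteColoring (G.induce {x : V | x ≠ u}) c' k := by
  refine ⟨fun x => c x.1, fun x => hc.1 x.1, ?_, ?_⟩
  · intro i hi
    obtain ⟨w, hw⟩ := hc.2.1 i hi
    by_cases hwu : w = u
    · exact ⟨⟨v, huv.symm⟩, by show c v = i; rw [← hcol, ← hwu, hw]⟩
    · exact ⟨⟨w, hwu⟩, hw⟩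
  · intro i j hi hj hij
    obtain ⟨a, b, hab, ha, hb⟩ := hc.2.2 i j hi hj hij
    by_cases hau : a = u
    · subst hau
      have hbv : b ≠ v := by
        rintro rfl
        exact hij (by rw [← ha, ← hb, hcol])
      have hbN : b ∈ G.neighborSet v := by
        have := hN hab
        rcases this with h | h
        · exact absurd h hbv
        · exact h
      exact ⟨⟨v, huv.symm⟩, ⟨b, hab.ne'⟩, hbN, by show c v = i; rw [← hcol]; exact ha, hb⟩
    · by_cases hbu : b = u
      · subst hbu
        have hav : a ≠ v := by
          rintro rfl
          exact hij (by rw [← ha, ← hb, hcol])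
        have haN : a ∈ G.neighborSet v := by
          rcases hN hab.symm with h | h
          · exact absurd h hav
          · exact h
        exact ⟨⟨a, hab.ne⟩, ⟨v, huv.symm⟩, (G.mem_neighborSet v a).mp haN |>.symm, ha,
          by show c v = j; rw [← hcol]; exact hb⟩
      · exact ⟨⟨a, hau⟩, ⟨b, hbu⟩, hab, ha, hb⟩
end
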